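/- arXiv:1301.1080 — 5 statements merged into one kernel-verified Lean document; each statement's English description precedes it below -/
import Mathlib

section
/- Let D ⊆ ℝⁿ be a nonempty closed set, γ : D → ℝⁿ a map with |γ(x) - γ(x')| ≤ c|x - x'| for all x, x' ∈ D, where c > 1. Define ρ(x,y) = inf over x₀ ∈ D of |(x,y) - (x₀, γ(x₀))|, and suppose ξ_x ∈ D is a point achieving inf over x' ∈ D of |x - x'|. Define ρ̃(x,y) = |x - ξ_x| + |y - γ(ξ_x)|. Then ρ(x,y) ≤ ρ̃(x,y) ≤ 2(c+1)·ρ(x,y) for all x, y ∈ ℝⁿ. -/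
open MeasureTheory

theorem stmt1 (n : ℕ) (D : Set (EuclideanSpace ℝ (Fin n))) (hDne : D.Nonempty)
    (hDcl : IsClosed D)
    (γ : EuclideanSpace ℝ (Fin n) → EuclideanSpace ℝ (Fin n)) (c : ℝ) (hc : 1 < c)
    (hγ : ∀ x ∈ D, ∀ x' ∈ D, ‖γ x - γ x'‖ ≤ c * ‖x - x'‖)
    (ξ : EuclideanSpace ℝ (Fin n) → EuclideanSpace ℝ (Fin n))
    (hξmem : ∀ x, ξ x ∈ D)
    (hξmin : ∀ x, ∀ x' ∈ D, ‖x - ξ x‖ ≤ ‖x - x'‖)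
    (ρ : EuclideanSpace ℝ (Fin n) → EuclideanSpace ℝ (Fin n) → ℝ)
    (hρ : ∀ x y, ρ x y = ⨅ x₀ : D,
      Real.sqrt (‖x - (x₀ : EuclideanSpace ℝ (Fin n))‖ ^ 2 + ‖y - γ x₀‖ ^ 2)) :
    ∀ x y, ρ x y ≤ ‖x - ξ x‖ + ‖y - γ (ξ x)‖ ∧
      ‖x - ξ x‖ + ‖y - γ (ξ x)‖ ≤ 2 * (c + 1) * ρ x y := by
  intro x y
  have hne : Nonempty D := hDne.to_subtype
  set f : D → ℝ := fun x₀ =>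
    Real.sqrt (‖x - (x₀ : EuclideanSpace ℝ (Fin n))‖ ^ 2 + ‖y - γ x₀‖ ^ 2) with hf
  have hbdd : BddBelow (Set.range f) := by
    refine ⟨0, ?_⟩
    rintro _ ⟨z, rfl⟩
    exact Real.sqrt_nonneg _
  -- generic: a ≤ sqrt(a²+b²), b ≤ sqrt(a²+b²) for a,b ≥ 0
  have key : ∀ a b : ℝ, 0 ≤ a → 0 ≤ b →
      a ≤ Real.sqrt (a ^ 2 + b ^ 2) ∧ b ≤ Real.sqrt (a ^ 2 + b ^ 2) := by
    intro a b ha hb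
    constructor
    · nlinarith [Real.sq_sqrt (by positivity : (0:ℝ) ≤ a ^ 2 + b ^ 2),
        Real.sqrt_nonneg (a ^ 2 + b ^ 2)]
    · nlinarith [Real.sq_sqrt (by positivity : (0:ℝ) ≤ a ^ 2 + b ^ 2),
        Real.sqrt_nonneg (a ^ 2 + b ^ 2)]
  constructor
  · rw [hρ]
    refine le_trans (ciInf_le hbdd ⟨ξ x, hξmem x⟩) ?_
    have h1 : Real.sqrt (‖x - ξ x‖ ^ 2 + ‖y - γ (ξ x)‖ ^ 2)
        ≤ Real.sqrt ((‖x - ξ x‖ + ‖y - γ (ξ x)‖) ^ 2) := by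
      apply Real.sqrt_le_sqrt
      nlinarith [norm_nonneg (x - ξ x), norm_nonneg (y - γ (ξ x))]
    calc f ⟨ξ x, hξmem x⟩ ≤ Real.sqrt ((‖x - ξ x‖ + ‖y - γ (ξ x)‖) ^ 2) := h1
      _ = ‖x - ξ x‖ + ‖y - γ (ξ x)‖ := Real.sqrt_sq (by positivity)
  · have hpos : (0:ℝ) < 2 * (c + 1) := by linarith
    rw [hρ, ← div_le_iff₀' hpos]
    refine le_ciInf ?_
    rintro ⟨x₀, hx₀⟩
    rw [div_le_iff₀' hpos]
    set a := ‖x - x₀‖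
    set b := ‖y - γ x₀‖
    obtain ⟨ha, hb⟩ := key a b (norm_nonneg _) (norm_nonneg _)
    have h1 : ‖x - ξ x‖ ≤ a := hξmin x x₀ hx₀
    have h2 : ‖y - γ (ξ x)‖ ≤ b + c * ‖x₀ - ξ x‖ := by
      have := hγ x₀ hx₀ (ξ x) (hξmem x)
      calc ‖y - γ (ξ x)‖ ≤ ‖y - γ x₀‖ + ‖γ x₀ - γ (ξ x)‖ := norm_sub_le_norm_sub_add_norm_sub _ _ _
        _ ≤ b + c * ‖x₀ - ξ x‖ := by exact add_le_add le_rfl this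
    have h3 : ‖x₀ - ξ x‖ ≤ ‖x₀ - x‖ + ‖x - ξ x‖ := norm_sub_le_norm_sub_add_norm_sub _ _ _
    have h4 : ‖x₀ - x‖ = a := norm_sub_rev _ _
    nlinarith [Real.sqrt_nonneg (a ^ 2 + b ^ 2)]
end

section
/- Let D ⊆ ℝⁿ be a nonempty closed set and γ : D → ℝⁿ injective with Lipschitz inverse: |γ⁻¹(y) - γ⁻¹(y')| ≤ c|y - y'| for all y, y' ∈ γ(D), with c > 1. For y ∈ ℝⁿ, let η_y ∈ γ(D) be a point achieving inf over y' ∈ γ(D) of |y - y'|. Define ρ(x,y) = inf over x₀ ∈ D of |(x,y) - (x₀, γ(x₀))| and ρ̃*(x,y) = |y - η_y| + |x - γ⁻¹(η_y)|. Then ρ(x,y) ≤ ρ̃*(x,y) ≤ 2(c+1)·ρ(x,y) for all x, y ∈ ℝⁿ. -/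
open MeasureTheory

theorem stmt2 (n : ℕ) (D : Set (EuclideanSpace ℝ (Fin n))) (hDne : D.Nonempty)
    (hDcl : IsClosed D)
    (γ γinv : EuclideanSpace ℝ (Fin n) → EuclideanSpace ℝ (Fin n))
    (hinj : Set.InjOn γ D) (himcl : IsClosed (γ '' D))
    (hγinv : ∀ x ∈ D, γinv (γ x) = x)
    (c : ℝ) (hc : 1 < c)
    (hlip : ∀ y ∈ γ '' D, ∀ y' ∈ γ '' D, ‖γinv y - γinv y'‖ ≤ c * ‖y - y'‖)
    (η : EuclideanSpace ℝ (Fin n) → EuclideanSpace ℝ (Fin n))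
    (hηmem : ∀ y, η y ∈ γ '' D)
    (hηmin : ∀ y, ∀ y' ∈ γ '' D, ‖y - η y‖ ≤ ‖y - y'‖)
    (ρ : EuclideanSpace ℝ (Fin n) → EuclideanSpace ℝ (Fin n) → ℝ)
    (hρ : ∀ x y, ρ x y = ⨅ x₀ : D,
      Real.sqrt (‖x - (x₀ : EuclideanSpace ℝ (Fin n))‖ ^ 2 + ‖y - γ x₀‖ ^ 2)) :
    ∀ x y, ρ x y ≤ ‖y - η y‖ + ‖x - γinv (η y)‖ ∧
      ‖y - η y‖ + ‖x - γinv (η y)‖ ≤ 2 * (c + 1) * ρ x y := by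
  intro x y
  obtain ⟨x₁, hx₁D, hx₁⟩ := hηmem y
  have hginv : γinv (η y) = x₁ := by rw [← hx₁]; exact hγinv x₁ hx₁D
  have hne : Nonempty D := hDne.to_subtype
  have hbdd : BddBelow (Set.range fun x₀ : D =>
      Real.sqrt (‖x - (x₀ : EuclideanSpace ℝ (Fin n))‖ ^ 2 + ‖y - γ x₀‖ ^ 2)) := by
    refine ⟨0, ?_⟩
    rintro s ⟨x₀, rfl⟩
    exact Real.sqrt_nonneg _
  constructor
  · rw [hρ]
    refine le_trans (ciInf_le hbdd ⟨x₁, hx₁D⟩) ?_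
    have ha : (0:ℝ) ≤ ‖x - x₁‖ := norm_nonneg _
    have hb : (0:ℝ) ≤ ‖y - γ x₁‖ := norm_nonneg _
    calc Real.sqrt (‖x - x₁‖ ^ 2 + ‖y - γ x₁‖ ^ 2)
        ≤ Real.sqrt ((‖y - γ x₁‖ + ‖x - x₁‖) ^ 2) :=
          Real.sqrt_le_sqrt (by nlinarith)
      _ = ‖y - γ x₁‖ + ‖x - x₁‖ := Real.sqrt_sq (by linarith)
      _ = ‖y - η y‖ + ‖x - γinv (η y)‖ := by rw [hx₁, hginv]
  · have key : ∀ x₀ : D, (‖y - η y‖ + ‖x - γinv (η y)‖) / (2 * (c + 1)) ≤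
        Real.sqrt (‖x - (x₀ : EuclideanSpace ℝ (Fin n))‖ ^ 2 + ‖y - γ x₀‖ ^ 2) := by
      rintro ⟨x₀, hx₀⟩
      simp only
      set a := ‖x - x₀‖ with hadef
      set b := ‖y - γ x₀‖ with hbdef
      have ha0 : (0:ℝ) ≤ a := norm_nonneg _
      have hb0 : (0:ℝ) ≤ b := norm_nonneg _
      have hb : ‖y - η y‖ ≤ b := hηmin y _ ⟨x₀, hx₀, rfl⟩
      have hlip' : ‖x₀ - x₁‖ ≤ c * ‖γ x₀ - η y‖ := by
        have := hlip (γ x₀) ⟨x₀, hx₀, rfl⟩ (γ x₁) ⟨x₁, hx₁D, rfl⟩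
        rwa [hγinv x₀ hx₀, hγinv x₁ hx₁D, hx₁] at this
      have htri : ‖γ x₀ - η y‖ ≤ ‖γ x₀ - y‖ + ‖y - η y‖ := norm_sub_le_norm_sub_add_norm_sub _ _ _
      have hsym : ‖γ x₀ - y‖ = b := by rw [hbdef, norm_sub_rev]
      have h1 : ‖x₀ - x₁‖ ≤ 2 * c * b := by
        have hcb : c * ‖γ x₀ - η y‖ ≤ c * (b + b) := by
          apply mul_le_mul_of_nonneg_left _ (by linarith)
          rw [← hsym] at hb ⊢
          linarith
        linarith
      have h2 : ‖x - γinv (η y)‖ ≤ a + 2 * c * b := by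
        rw [hginv]
        have := norm_sub_le_norm_sub_add_norm_sub x x₀ x₁
        linarith
      have hsum : ‖y - η y‖ + ‖x - γinv (η y)‖ ≤ a + (2 * c + 1) * b := by nlinarith
      have hle : a + (2 * c + 1) * b ≤ 2 * (c + 1) * Real.sqrt (a ^ 2 + b ^ 2) := by
        have h0 : (0:ℝ) ≤ a + (2 * c + 1) * b := by nlinarith
        calc a + (2 * c + 1) * b = Real.sqrt ((a + (2 * c + 1) * b) ^ 2) :=
              (Real.sqrt_sq h0).symm
          _ ≤ Real.sqrt ((2 * (c + 1)) ^ 2 * (a ^ 2 + b ^ 2)) :=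
              Real.sqrt_le_sqrt (by nlinarith [sq_nonneg ((2 * c + 1) * a - b)])
          _ = 2 * (c + 1) * Real.sqrt (a ^ 2 + b ^ 2) := by
              rw [Real.sqrt_mul (by positivity), Real.sqrt_sq (by linarith)]
      rw [div_le_iff₀ (by linarith)]
      nlinarith [Real.sqrt_nonneg (a ^ 2 + b ^ 2)]
    have hinf := le_ciInf key
    rw [hρ]
    rw [div_le_iff₀ (by linarith)] at hinf
    linarith
end

section
/- Let ρ : ℝⁿ × ℝⁿ → [0,∞) and suppose there exist finitely many maps h₁, ..., h_r : ℝⁿ → ℝⁿ and a constant C₀ ≥ 1 such that for all x, y, ρ(x,y) ≥ C₀⁻¹ · min_{1≤i≤r} |x - h_i(y)|. Suppose a measurable kernel K : ℝⁿ × ℝⁿ → ℝ satisfies |K(x,y) - K(x,z)| ≤ A|y-z|^δ / ρ(x,y)^{n+δ} whenever |y - z| ≤ ρ(x,y)/2, for some A, δ > 0. Then there is a constant C depending only on n, r, A, δ, C₀ such that for all y ≠ z, ∫_{{x : ρ(x,y) ≥ 2|y-z|}} |K(x,y) - K(x,z)| dx ≤ C. -/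
open MeasureTheory

/-!
On `{x | ρ(x, y) ≥ 2|y - z|}` the smoothness estimate applies, and `ρ(x, y)` dominates both
`2d` (with `d = |y - z|`) and `C₀⁻¹ |x - hᵢ(y)|` for the nearest branch `i`, hence their mean
`d (1 + |x - hᵢ(y)| / (2 C₀ d))`. So the integrand is at most
`A d⁻ⁿ (1 + |x - hᵢ(y)| / (2 C₀ d))^(-(n + δ))` summed over `i`; rescaling by `2 C₀ d` turns each
summand into `A (2 C₀)ⁿ` times the integral of `(1 + |u|)^(-(n + δ))`, which is finite since
`δ > 0`, and the powers of `d` cancel.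
-/

open Module
open scoped ENNReal

theorem lintegral_one_add_norm_rpow_neg_pos {E : Type*} [NormedAddCommGroup E]
    [MeasurableSpace E] [BorelSpace E] (μ : Measure E) [NeZero μ] (p : ℝ) :
    0 < ∫⁻ u, ENNReal.ofReal ((1 + ‖u‖) ^ (-p)) ∂μ := by
  rw [lintegral_pos_iff_support (by fun_prop),
    Function.support_eq_univ fun u => (ENNReal.ofReal_pos.mpr (by positivity)).ne']
  exact Measure.measure_univ_pos.mpr (NeZero.ne μ)

theorem div_rpow_le_rpow_neg_mul_one_add_rpow_neg {a d ρ s m δ : ℝ} (ha : 0 ≤ a) (hd : 0 < d)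
    (hs : 0 ≤ s) (hmδ : 0 ≤ m + δ) (hρ : d * (1 + s) ≤ ρ) :
    a * d ^ δ / ρ ^ (m + δ) ≤ a * d ^ (-m) * (1 + s) ^ (-(m + δ)) := by
  have hs1 : 0 < 1 + s := by linarith
  calc a * d ^ δ / ρ ^ (m + δ) ≤ a * d ^ δ / (d * (1 + s)) ^ (m + δ) := by
        gcongr
    _ = a * d ^ (-m) * (1 + s) ^ (-(m + δ)) := by
        rw [Real.mul_rpow hd.le hs1.le, Real.rpow_neg hs1.le, Real.rpow_neg hd.le,
          Real.rpow_add hd]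
        field_simp

theorem mul_one_add_le_of_le_of_le {d ρ t C₀ : ℝ} (hd : 0 < d) (hC₀ : 0 < C₀)
    (hd_le : 2 * d ≤ ρ) (ht_le : C₀⁻¹ * t ≤ ρ) : d * (1 + (2 * C₀ * d)⁻¹ * t) ≤ ρ := by
  have : d * (1 + (2 * C₀ * d)⁻¹ * t) = (2 * d + C₀⁻¹ * t) / 2 := by
    field_simp
  linarith

section HaarMeasure

variable {E : Type*} [NormedAddCommGroup E] [NormedSpace ℝ E] [FiniteDimensional ℝ E]
  [MeasurableSpace E] [BorelSpace E] (μ : Measure E) [μ.IsAddHaarMeasure]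

theorem lintegral_comp_inv_smul_sub {f : E → ℝ≥0∞} (hf : Measurable f) (c : E) {R : ℝ}
    (hR : 0 < R) :
    ∫⁻ x, f (R⁻¹ • (x - c)) ∂μ = ENNReal.ofReal (R ^ finrank ℝ E) * ∫⁻ u, f u ∂μ := by
  rw [lintegral_sub_right_eq_self (fun v => f (R⁻¹ • v)) c,
    ← lintegral_map hf (measurable_const_smul _), Measure.map_addHaar_smul μ (inv_ne_zero hR.ne'),
    lintegral_smul_measure, inv_pow, inv_inv, abs_of_pos (by positivity), smul_eq_mul]

variable {ι : Type*} [Fintype ι] [Nonempty ι]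

theorem setLIntegral_abs_sub_le_of_holder {A δ C₀ : ℝ} (hA : 0 ≤ A) (hδ : 0 ≤ δ) (hC₀ : 0 < C₀)
    {ρ : E × E → ℝ} {h : ι → E → E} {K : E → E → ℝ}
    (hmin : ∀ x y, C₀⁻¹ * (⨅ i, ‖x - h i y‖) ≤ ρ (x, y))
    (hker : ∀ x y z, ‖y - z‖ ≤ ρ (x, y) / 2 →
      |K x y - K x z| ≤ A * ‖y - z‖ ^ δ / ρ (x, y) ^ ((finrank ℝ E : ℝ) + δ))
    {y z : E} (hyz : y ≠ z) :
    ∫⁻ x in {x | 2 * ‖y - z‖ ≤ ρ (x, y)}, ENNReal.ofReal |K x y - K x z| ∂μ ≤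
      Fintype.card ι * ENNReal.ofReal (A * (2 * C₀) ^ finrank ℝ E) *
        ∫⁻ u, ENNReal.ofReal ((1 + ‖u‖) ^ (-((finrank ℝ E : ℝ) + δ))) ∂μ := by
  set m : ℝ := (finrank ℝ E : ℝ)
  set d := ‖y - z‖
  have hd : 0 < d := norm_pos_iff.mpr (sub_ne_zero.mpr hyz)
  set R := 2 * C₀ * d
  have hR : 0 < R := by positivity
  set F : E → ℝ≥0∞ := fun u => ENNReal.ofReal ((1 + ‖u‖) ^ (-(m + δ)))
  have hF : Measurable F := by fun_prop
  have pointwise : ∀ x ∈ {x | 2 * d ≤ ρ (x, y)}, ENNReal.ofReal |K x y - K x z| ≤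
      ∑ i, ENNReal.ofReal (A * d ^ (-m)) * F (R⁻¹ • (x - h i y)) := by
    intro x hx
    obtain ⟨i₀, hi₀⟩ := exists_eq_ciInf_of_finite (f := fun i => ‖x - h i y‖)
    have hρ : d * (1 + R⁻¹ * ‖x - h i₀ y‖) ≤ ρ (x, y) :=
      mul_one_add_le_of_le_of_le hd hC₀ hx (hi₀ ▸ hmin x y)
    have hk : |K x y - K x z| ≤ A * d ^ (-m) * (1 + ‖R⁻¹ • (x - h i₀ y)‖) ^ (-(m + δ)) := by
      rw [norm_smul, Real.norm_of_nonneg (inv_pos.mpr hR).le]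
      exact (hker x y z (by linarith [hx.out])).trans
        (div_rpow_le_rpow_neg_mul_one_add_rpow_neg hA hd (by positivity) (by positivity) hρ)
    calc ENNReal.ofReal |K x y - K x z|
        ≤ ENNReal.ofReal (A * d ^ (-m)) * F (R⁻¹ • (x - h i₀ y)) := by
          rw [← ENNReal.ofReal_mul (by positivity)]
          exact ENNReal.ofReal_le_ofReal hk
      _ ≤ ∑ i, ENNReal.ofReal (A * d ^ (-m)) * F (R⁻¹ • (x - h i y)) :=
          Finset.single_le_sum
            (f := fun i => ENNReal.ofReal (A * d ^ (-m)) * F (R⁻¹ • (x - h i y)))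
            (fun _ _ => zero_le) (Finset.mem_univ i₀)
  have hconst : ENNReal.ofReal (A * d ^ (-m)) * ENNReal.ofReal (R ^ finrank ℝ E) =
      ENNReal.ofReal (A * (2 * C₀) ^ finrank ℝ E) := by
    rw [← ENNReal.ofReal_mul (by positivity)]
    congr 1
    rw [mul_pow, Real.rpow_neg hd.le, Real.rpow_natCast]
    field_simp
  calc ∫⁻ x in {x | 2 * d ≤ ρ (x, y)}, ENNReal.ofReal |K x y - K x z| ∂μ
      ≤ ∫⁻ x in {x | 2 * d ≤ ρ (x, y)},
          ∑ i, ENNReal.ofReal (A * d ^ (-m)) * F (R⁻¹ • (x - h i y)) ∂μ :=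
        setLIntegral_mono (by fun_prop) pointwise
    _ ≤ ∫⁻ x, ∑ i, ENNReal.ofReal (A * d ^ (-m)) * F (R⁻¹ • (x - h i y)) ∂μ :=
        setLIntegral_le_lintegral _ _
    _ = ∑ i : ι, ENNReal.ofReal (A * d ^ (-m)) *
          (ENNReal.ofReal (R ^ finrank ℝ E) * ∫⁻ u, F u ∂μ) := by
        have hFi : ∀ i, Measurable fun x => F (R⁻¹ • (x - h i y)) := fun i =>
          hF.comp ((measurable_sub_const _).const_smul _)
        rw [lintegral_finsetSum _ fun i _ => (hFi i).const_mul _]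
        refine Finset.sum_congr rfl fun i _ => ?_
        rw [lintegral_const_mul _ (hFi i), lintegral_comp_inv_smul_sub μ hF _ hR]
    _ = Fintype.card ι * ENNReal.ofReal (A * (2 * C₀) ^ finrank ℝ E) * ∫⁻ u, F u ∂μ := by
        rw [Finset.sum_const, Finset.card_univ, nsmul_eq_mul, mul_assoc,
          ← mul_assoc (ENNReal.ofReal _), hconst, ← mul_assoc]

end HaarMeasure

theorem stmt3_general (n r : ℕ) (hr : 0 < r) (A δ C₀ : ℝ)
    (hA : 0 < A) (hδ : 0 < δ) (hC₀ : 1 ≤ C₀) :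
    ∃ C : ℝ, 0 < C ∧
      ∀ (ρ : EuclideanSpace ℝ (Fin n) × EuclideanSpace ℝ (Fin n) → ℝ)
        (h : Fin r → EuclideanSpace ℝ (Fin n) → EuclideanSpace ℝ (Fin n))
        (K : EuclideanSpace ℝ (Fin n) → EuclideanSpace ℝ (Fin n) → ℝ),
        Measurable (Function.uncurry K) →
        Measurable ρ →
        (∀ x y, 0 ≤ ρ (x, y)) →
        (∀ x y, C₀⁻¹ * (⨅ i : Fin r, ‖x - h i y‖) ≤ ρ (x, y)) →
        (∀ x y z, ‖y - z‖ ≤ ρ (x, y) / 2 →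
          |K x y - K x z| ≤ A * ‖y - z‖ ^ δ / ρ (x, y) ^ ((n : ℝ) + δ)) →
        ∀ y z, y ≠ z →
          ∫⁻ x in {x | 2 * ‖y - z‖ ≤ ρ (x, y)}, ENNReal.ofReal |K x y - K x z| ≤
            ENNReal.ofReal C := by
  have : Nonempty (Fin r) := ⟨⟨0, hr⟩⟩
  set I := ∫⁻ u : EuclideanSpace ℝ (Fin n), ENNReal.ofReal ((1 + ‖u‖) ^ (-((n : ℝ) + δ)))
  have hI_lt_top : I < ∞ :=
    finite_integral_one_add_norm (by rw [finrank_euclideanSpace_fin]; linarith)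
  have hI_pos : 0 < I := lintegral_one_add_norm_rpow_neg_pos volume _
  refine ⟨r * (A * (2 * C₀) ^ n) * I.toReal,
    by have := ENNReal.toReal_pos hI_pos.ne' hI_lt_top.ne; positivity, ?_⟩
  intro ρ h K _ _ _ hmin hker y z hyz
  have key := setLIntegral_abs_sub_le_of_holder volume hA.le hδ.le (by linarith) hmin
    (by simpa only [finrank_euclideanSpace_fin] using hker) hyz
  simp only [finrank_euclideanSpace_fin, Fintype.card_fin] at key
  refine key.trans_eq ?_
  rw [ENNReal.ofReal_mul (by positivity : (0 : ℝ) ≤ r * (A * (2 * C₀) ^ n)),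
    ENNReal.ofReal_mul r.cast_nonneg,
    ENNReal.ofReal_natCast, ENNReal.ofReal_toReal hI_lt_top.ne]

theorem stmt3 (n r : ℕ) (hn : 0 < n) (hr : 0 < r) (A δ C₀ : ℝ)
    (hA : 0 < A) (hδ : 0 < δ) (hC₀ : 1 ≤ C₀) :
    ∃ C : ℝ, 0 < C ∧
      ∀ (ρ : EuclideanSpace ℝ (Fin n) × EuclideanSpace ℝ (Fin n) → ℝ)
        (h : Fin r → EuclideanSpace ℝ (Fin n) → EuclideanSpace ℝ (Fin n))
        (K : EuclideanSpace ℝ (Fin n) → EuclideanSpace ℝ (Fin n) → ℝ),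
        Measurable (Function.uncurry K) →
        Measurable ρ →
        (∀ x y, 0 ≤ ρ (x, y)) →
        (∀ x y, C₀⁻¹ * (⨅ i : Fin r, ‖x - h i y‖) ≤ ρ (x, y)) →
        (∀ x y z, ‖y - z‖ ≤ ρ (x, y) / 2 →
          |K x y - K x z| ≤ A * ‖y - z‖ ^ δ / ρ (x, y) ^ ((n : ℝ) + δ)) →
        ∀ y z, y ≠ z →
          ∫⁻ x in {x | 2 * ‖y - z‖ ≤ ρ (x, y)}, ENNReal.ofReal |K x y - K x z| ≤
            ENNReal.ofReal C :=
  stmt3_general n r hr A δ C₀ hA hδ hC₀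
end

section
/- Let D ⊆ ℝⁿ be closed nonempty, γ : D → ℝⁿ injective with γ(D) closed and γ⁻¹ Lipschitz with constant c > 1 on γ(D). Let Q be a cube in ℝⁿ with side length ℓ and suppose d(Q, γ(D)) < 2√n·ℓ. For y ∈ ℝⁿ let η_y be a nearest point of γ(D) to y. Fix θ > 2√n + 5√n·c and set Q_θ = {x ∈ ℝⁿ : ∃ y ∈ Q, |x - γ⁻¹(η_y)| ≤ θℓ}. Then for all x ∉ Q_θ, all y ∈ Q, and all z ∈ γ(D): max(|x - γ⁻¹(z)|, |y - z|) ≥ 2√n·ℓ. -/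
open MeasureTheory

theorem stmt6 (n : ℕ) (hn : 0 < n)
    (D : Set (EuclideanSpace ℝ (Fin n))) (hDne : D.Nonempty) (hDcl : IsClosed D)
    (γ γinv : EuclideanSpace ℝ (Fin n) → EuclideanSpace ℝ (Fin n))
    (hinj : Set.InjOn γ D) (himcl : IsClosed (γ '' D))
    (hγinv : ∀ x ∈ D, γinv (γ x) = x)
    (c : ℝ) (hc : 1 < c)
    (hlip : ∀ y ∈ γ '' D, ∀ y' ∈ γ '' D, ‖γinv y - γinv y'‖ ≤ c * ‖y - y'‖)
    (ℓ θ : ℝ) (hℓ : 0 < ℓ) (q : EuclideanSpace ℝ (Fin n))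
    (Q : Set (EuclideanSpace ℝ (Fin n)))
    (hQ : Q = {y | ∀ i, q i ≤ y i ∧ y i ≤ q i + ℓ})
    (hθ : 2 * Real.sqrt n + 5 * Real.sqrt n * c < θ)
    (η : EuclideanSpace ℝ (Fin n) → EuclideanSpace ℝ (Fin n))
    (hηmem : ∀ y, η y ∈ γ '' D)
    (hηmin : ∀ y, ∀ y' ∈ γ '' D, ‖y - η y‖ ≤ ‖y - y'‖)
    (hd : ∃ y ∈ Q, ∃ z ∈ γ '' D, ‖y - z‖ < 2 * Real.sqrt n * ℓ)
    (Qθ : Set (EuclideanSpace ℝ (Fin n)))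
    (hQθ : Qθ = {x | ∃ y ∈ Q, ‖x - γinv (η y)‖ ≤ θ * ℓ}) :
    ∀ x ∉ Qθ, ∀ y ∈ Q, ∀ z ∈ γ '' D,
      2 * Real.sqrt n * ℓ ≤ max ‖x - γinv z‖ ‖y - z‖ := by
  intro x hx y hy z hz
  have hs : 0 < Real.sqrt n := Real.sqrt_pos.2 (by exact_mod_cast hn)
  set s := Real.sqrt n with hsdef
  by_cases hyz : 2 * s * ℓ ≤ ‖y - z‖
  · exact le_trans hyz (le_max_right _ _)
  push_neg at hyz
  refine le_trans ?_ (le_max_left _ _)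
  rw [hQθ] at hx
  simp only [Set.mem_setOf_eq, not_exists, not_and] at hx
  have h1 : ¬ ‖x - γinv (η y)‖ ≤ θ * ℓ := hx y hy
  push_neg at h1
  have h2 : ‖γinv (η y) - γinv z‖ ≤ c * ‖η y - z‖ := hlip _ (hηmem y) _ hz
  have h3 : ‖y - η y‖ ≤ ‖y - z‖ := hηmin y z hz
  have h4 : ‖η y - z‖ ≤ ‖y - η y‖ + ‖y - z‖ := by
    have := norm_sub_le (η y - y) (z - y)
    calc ‖η y - z‖ = ‖(η y - y) - (z - y)‖ := by abel_nf
    _ ≤ ‖η y - y‖ + ‖z - y‖ := norm_sub_le _ _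
    _ = ‖y - η y‖ + ‖y - z‖ := by rw [norm_sub_rev (η y), norm_sub_rev z]
  have h5 : ‖x - γinv (η y)‖ ≤ ‖x - γinv z‖ + ‖γinv (η y) - γinv z‖ := by
    calc ‖x - γinv (η y)‖ = ‖(x - γinv z) - (γinv (η y) - γinv z)‖ := by abel_nf
    _ ≤ _ := norm_sub_le _ _
  have hc0 : (0:ℝ) < c := lt_trans one_pos hc
  nlinarith [h1, h2, h3, h4, h5, hs, hℓ, hc, mul_pos hs hℓ]
end

section
/- Under the hypotheses of the previous statement (D closed, γ injective with Lipschitz inverse constant c > 1, Q a cube of side length ℓ, θ > 2√n + 5√n·c, and Q_θ = {x : ∃ y ∈ Q, |x - γ⁻¹(η_y)| ≤ θℓ} when d(Q,γ(D)) < 2√n·ℓ, Q_θ = ∅ otherwise), define ρ(x,y) = inf over x₀ ∈ D of |(x,y) - (x₀,γ(x₀))|. Then ρ(x,y) ≥ 2√n·ℓ(Q) for all x ∉ Q_θ and all y ∈ Q. -/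
open MeasureTheory

theorem stmt7 (n : ℕ) (hn : 0 < n)
    (D : Set (EuclideanSpace ℝ (Fin n))) (hDne : D.Nonempty) (hDcl : IsClosed D)
    (γ γinv : EuclideanSpace ℝ (Fin n) → EuclideanSpace ℝ (Fin n))
    (hinj : Set.InjOn γ D) (himcl : IsClosed (γ '' D))
    (hγinv : ∀ x ∈ D, γinv (γ x) = x)
    (c : ℝ) (hc : 1 < c)
    (hlip : ∀ y ∈ γ '' D, ∀ y' ∈ γ '' D, ‖γinv y - γinv y'‖ ≤ c * ‖y - y'‖)
    (ℓ θ : ℝ) (hℓ : 0 < ℓ) (q : EuclideanSpace ℝ (Fin n))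
    (Q : Set (EuclideanSpace ℝ (Fin n)))
    (hQ : Q = {y | ∀ i, q i ≤ y i ∧ y i ≤ q i + ℓ})
    (hθ : 2 * Real.sqrt n + 5 * Real.sqrt n * c < θ)
    (η : EuclideanSpace ℝ (Fin n) → EuclideanSpace ℝ (Fin n))
    (hηmem : ∀ y, η y ∈ γ '' D)
    (hηmin : ∀ y, ∀ y' ∈ γ '' D, ‖y - η y‖ ≤ ‖y - y'‖)
    (Qθ : Set (EuclideanSpace ℝ (Fin n)))
    (hQθ : Qθ = {x | (∃ y ∈ Q, ∃ z ∈ γ '' D, ‖y - z‖ < 2 * Real.sqrt n * ℓ) ∧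
      ∃ y ∈ Q, ‖x - γinv (η y)‖ ≤ θ * ℓ})
    (ρ : EuclideanSpace ℝ (Fin n) → EuclideanSpace ℝ (Fin n) → ℝ)
    (hρ : ∀ x y, ρ x y = ⨅ x₀ : D,
      Real.sqrt (‖x - (x₀ : EuclideanSpace ℝ (Fin n))‖ ^ 2 + ‖y - γ x₀‖ ^ 2)) :
    ∀ x ∉ Qθ, ∀ y ∈ Q, 2 * Real.sqrt n * ℓ ≤ ρ x y := by

  intro x hx y hy
  by_contra hlt
  push_neg at hlt
  rw [hρ] at hlt
  have hD : Nonempty D := hDne.to_subtype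
  obtain ⟨x₀, hx₀⟩ := exists_lt_of_ciInf_lt hlt
  set s := Real.sqrt n with hs
  have hspos : 0 < s := Real.sqrt_pos.mpr (by exact_mod_cast hn)
  have hxle : ‖x - (x₀ : EuclideanSpace ℝ (Fin n))‖ ≤
      Real.sqrt (‖x - (x₀ : EuclideanSpace ℝ (Fin n))‖ ^ 2 + ‖y - γ x₀‖ ^ 2) :=
    calc ‖x - (x₀ : EuclideanSpace ℝ (Fin n))‖
        = Real.sqrt (‖x - (x₀ : EuclideanSpace ℝ (Fin n))‖ ^ 2) :=
          (Real.sqrt_sq (norm_nonneg _)).symm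
      _ ≤ _ := Real.sqrt_le_sqrt (le_add_of_nonneg_right (by positivity))
  have hyle : ‖y - γ x₀‖ ≤
      Real.sqrt (‖x - (x₀ : EuclideanSpace ℝ (Fin n))‖ ^ 2 + ‖y - γ x₀‖ ^ 2) :=
    calc ‖y - γ x₀‖ = Real.sqrt (‖y - γ x₀‖ ^ 2) := (Real.sqrt_sq (norm_nonneg _)).symm
      _ ≤ _ := Real.sqrt_le_sqrt (le_add_of_nonneg_left (by positivity))
  have hxlt : ‖x - (x₀ : EuclideanSpace ℝ (Fin n))‖ < 2 * s * ℓ := lt_of_le_of_lt hxle hx₀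
  have hylt : ‖y - γ x₀‖ < 2 * s * ℓ := lt_of_le_of_lt hyle hx₀
  rw [hQθ] at hx
  simp only [Set.mem_setOf_eq] at hx
  push_neg at hx
  have hmem : γ (x₀ : EuclideanSpace ℝ (Fin n)) ∈ γ '' D := ⟨x₀, x₀.2, rfl⟩
  have hfar := hx ⟨y, hy, γ x₀, hmem, hylt⟩ y hy
  have h1 : ‖y - η y‖ ≤ ‖y - γ x₀‖ := hηmin y _ hmem
  have h2 : ‖γinv (η y) - γinv (γ x₀)‖ ≤ c * ‖η y - γ x₀‖ := hlip _ (hηmem y) _ hmem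
  rw [hγinv x₀ x₀.2] at h2
  have h3 : ‖η y - γ x₀‖ ≤ ‖y - η y‖ + ‖y - γ x₀‖ := by
    calc ‖η y - γ x₀‖ = ‖(η y - y) + (y - γ x₀)‖ := by rw [sub_add_sub_cancel]
    _ ≤ ‖η y - y‖ + ‖y - γ x₀‖ := norm_add_le _ _
    _ = ‖y - η y‖ + ‖y - γ x₀‖ := by rw [norm_sub_rev]
  have h4 : ‖x - γinv (η y)‖ ≤ ‖x - (x₀ : EuclideanSpace ℝ (Fin n))‖ +
      ‖γinv (η y) - (x₀ : EuclideanSpace ℝ (Fin n))‖ := by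
    calc ‖x - γinv (η y)‖ = ‖(x - x₀) + ((x₀ : EuclideanSpace ℝ (Fin n)) - γinv (η y))‖ := by
          rw [sub_add_sub_cancel]
    _ ≤ ‖x - (x₀ : EuclideanSpace ℝ (Fin n))‖ + ‖(x₀ : EuclideanSpace ℝ (Fin n)) - γinv (η y)‖ :=
          norm_add_le _ _
    _ = _ := by rw [norm_sub_rev ((x₀ : EuclideanSpace ℝ (Fin n))) _]
  have hc0 : (0:ℝ) < c := lt_trans one_pos hc
  have h5 : c * ‖η y - γ (x₀ : EuclideanSpace ℝ (Fin n))‖ ≤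
      c * (‖y - η y‖ + ‖y - γ x₀‖) := mul_le_mul_of_nonneg_left h3 hc0.le
  have h6 : c * (‖y - η y‖ + ‖y - γ (x₀ : EuclideanSpace ℝ (Fin n))‖) ≤ c * (4 * s * ℓ) :=
    mul_le_mul_of_nonneg_left (by linarith) hc0.le
  have h7 := mul_lt_mul_of_pos_right hθ hℓ
  nlinarith [mul_pos (mul_pos hspos hc0) hℓ]
end
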